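/- Let (X, μ, T) be a probability-measure-preserving system and g : X → ℝ an integrable function. Suppose for μ-a.e. x, the Birkhoff averages (1/n) Σ_{i=0}^{n-1} g(Tⁱ x) converge to a limit L(x) ≤ α₂, and g(x) > α₁ for all x, with α₁ < α₂ < α₃. Let Δ = {x : ∀ n ≥ 1, (1/n) Σ_{i=0}^{n-1} g(Tⁱ x) ≤ α₃}. If T is ergodic and L = ∫ g dμ ≤ α₂ < α₃, then μ(Δ) ≥ (α₃ - α₂)/(α₃ - α₁). -/

import Mathlib

/-!
Let `φ = g - α₃` and let `E` be the set of points at which some Birkhoff sum of `φ` is positive.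
The maximal ergodic theorem (Garsia's argument with the running maxima of the Birkhoff sums) gives
`∫_E φ ≥ 0`. Off `E` every Birkhoff average of `g` is at most `α₃`, so `Eᶜ ⊆ Δ` up to a null set,
and `φ > α₁ - α₃` everywhere, whence `α₂ - α₃ ≥ ∫ φ ≥ ∫_{Eᶜ} φ ≥ (α₁ - α₃) μ(Eᶜ)`.
-/

open MeasureTheory Filter Finset

section BirkhoffMax

variable {α : Type*} (T : α → α) (f : α → ℝ)

noncomputable def birkhoffMax (N : ℕ) : α → ℝ :=
  (range (N + 1)).sup' nonempty_range_add_one fun k => birkhoffSum T f k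

variable {T f}

lemma birkhoffMax_apply (N : ℕ) (x : α) :
    birkhoffMax T f N x =
      (range (N + 1)).sup' nonempty_range_add_one fun k => birkhoffSum T f k x :=
  Finset.sup'_apply _ _ _

lemma birkhoffSum_le_birkhoffMax {k N : ℕ} (hk : k ≤ N) (x : α) :
    birkhoffSum T f k x ≤ birkhoffMax T f N x := by
  rw [birkhoffMax_apply]
  exact le_sup' (fun k => birkhoffSum T f k x) (mem_range_succ_iff.2 hk)

lemma birkhoffMax_nonneg (N : ℕ) (x : α) : 0 ≤ birkhoffMax T f N x := by
  simpa using birkhoffSum_le_birkhoffMax (T := T) (f := f) N.zero_le x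

lemma exists_birkhoffMax_eq (N : ℕ) (x : α) :
    ∃ k ≤ N, birkhoffMax T f N x = birkhoffSum T f k x := by
  obtain ⟨k, hk, h⟩ := exists_mem_eq_sup' nonempty_range_add_one fun k => birkhoffSum T f k x
  exact ⟨k, mem_range_succ_iff.1 hk, (birkhoffMax_apply N x).trans h⟩

lemma monotone_birkhoffMax (x : α) : Monotone fun N => birkhoffMax T f N x := by
  intro N N' hN
  obtain ⟨k, hk, h⟩ := exists_birkhoffMax_eq N x
  change birkhoffMax T f N x ≤ _
  rw [h]
  exact birkhoffSum_le_birkhoffMax (hk.trans hN) x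

lemma iUnion_setOf_birkhoffMax_pos :
    ⋃ N, {x | 0 < birkhoffMax T f N x} = {x | ∃ n, 0 < birkhoffSum T f n x} := by
  ext x
  simp only [Set.mem_iUnion, Set.mem_ofPred_eq]
  constructor
  · rintro ⟨N, hN⟩
    obtain ⟨k, -, h⟩ := exists_birkhoffMax_eq N x
    exact ⟨k, h ▸ hN⟩
  · rintro ⟨n, hn⟩
    exact ⟨n, hn.trans_le (birkhoffSum_le_birkhoffMax le_rfl x)⟩

/-- Where the running maximum is positive it is attained by a sum `S_{k+1} x = f x + S_k (T x)`. -/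
lemma birkhoffMax_le_add_birkhoffMax_apply {N : ℕ} {x : α} (hx : 0 < birkhoffMax T f N x) :
    birkhoffMax T f N x ≤ f x + birkhoffMax T f N (T x) := by
  obtain ⟨_ | k, hk, h⟩ := exists_birkhoffMax_eq N x
  · rw [h, birkhoffSum_zero] at hx
    exact absurd hx (lt_irrefl 0)
  · rw [h, birkhoffSum_succ']
    gcongr
    exact birkhoffSum_le_birkhoffMax (by omega) _

lemma birkhoffSum_sub_const (c : ℝ) (n : ℕ) (x : α) :
    birkhoffSum T (fun y => f y - c) n x = birkhoffSum T f n x - n * c := by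
  simp [birkhoffSum, Finset.sum_sub_distrib]

variable [MeasurableSpace α]

lemma measurable_birkhoffSum (hT : Measurable T) (hf : Measurable f) (n : ℕ) :
    Measurable (birkhoffSum T f n) :=
  Finset.measurable_sum _ fun i _ => hf.comp (hT.iterate i)

lemma measurable_birkhoffMax (hT : Measurable T) (hf : Measurable f) (N : ℕ) :
    Measurable (birkhoffMax T f N) :=
  Finset.measurable_sup' _ fun n _ => measurable_birkhoffSum hT hf n

variable {μ : Measure α}

lemma integrable_birkhoffSum (hT : MeasurePreserving T μ μ) (hf : Integrable f μ) (n : ℕ) :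
    Integrable (birkhoffSum T f n) μ :=
  integrable_finsetSum _ fun i _ =>
    ((hT.iterate i).integrable_comp hf.aestronglyMeasurable).2 hf

lemma integrable_birkhoffMax (hT : MeasurePreserving T μ μ) (hf : Integrable f μ) (N : ℕ) :
    Integrable (birkhoffMax T f N) μ :=
  Finset.sup'_induction (p := fun φ => Integrable φ μ) _ _ (fun _ h₁ _ h₂ => h₁.sup h₂)
    fun n _ => integrable_birkhoffSum hT hf n

theorem setIntegral_birkhoffMax_pos_nonneg (hT : MeasurePreserving T μ μ) (hfm : Measurable f)
    (hf : Integrable f μ) (N : ℕ) :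
    0 ≤ ∫ x in {x | 0 < birkhoffMax T f N x}, f x ∂μ := by
  set M := birkhoffMax T f N
  set E := {x | 0 < M x}
  have hE : MeasurableSet E :=
    measurableSet_lt measurable_const (measurable_birkhoffMax hT.measurable hfm N)
  have hM : Integrable M μ := integrable_birkhoffMax hT hf N
  have hMT : Integrable (fun x => M (T x)) μ :=
    (hT.integrable_comp hM.aestronglyMeasurable).2 hM
  have hMT_eq : ∫ x, M (T x) ∂μ = ∫ x, M x ∂μ := by
    rw [← integral_map hT.aemeasurable (by rw [hT.map_eq]; exact hM.aestronglyMeasurable),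
      hT.map_eq]
  have hME : ∫ x in E, M x ∂μ = ∫ x, M x ∂μ :=
    setIntegral_eq_integral_of_forall_compl_eq_zero fun x hx =>
      le_antisymm (not_lt.1 hx) (birkhoffMax_nonneg N x)
  calc 0 = ∫ x, M x ∂μ - ∫ x, M (T x) ∂μ := by rw [hMT_eq, sub_self]
    _ = ∫ x in E, M x ∂μ - ∫ x, M (T x) ∂μ := by rw [hME]
    _ ≤ ∫ x in E, M x ∂μ - ∫ x in E, M (T x) ∂μ :=
      sub_le_sub_left (setIntegral_le_integral hMT
        (Eventually.of_forall fun x => birkhoffMax_nonneg N (T x))) _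
    _ = ∫ x in E, (M x - M (T x)) ∂μ := (integral_sub hM.integrableOn hMT.integrableOn).symm
    _ ≤ ∫ x in E, f x ∂μ :=
      setIntegral_mono_on (hM.sub hMT).integrableOn hf.integrableOn hE fun x hx => by
        linarith [birkhoffMax_le_add_birkhoffMax_apply hx]

/-- The maximal ergodic theorem. -/
theorem setIntegral_exists_birkhoffSum_pos_nonneg (hT : MeasurePreserving T μ μ)
    (hfm : Measurable f) (hf : Integrable f μ) :
    0 ≤ ∫ x in {x | ∃ n, 0 < birkhoffSum T f n x}, f x ∂μ := by
  rw [← iUnion_setOf_birkhoffMax_pos]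
  refine ge_of_tendsto' (tendsto_setIntegral_of_monotone (fun N => ?_)
    (fun N N' h x hx => hx.trans_le (monotone_birkhoffMax x h)) hf.integrableOn)
    (setIntegral_birkhoffMax_pos_nonneg hT hfm hf)
  exact measurableSet_lt measurable_const (measurable_birkhoffMax hT.measurable hfm N)

end BirkhoffMax

section Pliss

variable {α : Type*} [MeasurableSpace α] {μ : Measure α} {T : α → α} {f : α → ℝ}

theorem sub_le_mul_measureReal_forall_birkhoffSum_le [IsProbabilityMeasure μ]
    (hT : MeasurePreserving T μ μ) (hfm : Measurable f) (hf : Integrable f μ) {a b c : ℝ}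
    (ha : ∀ x, a ≤ f x) (hb : ∫ x, f x ∂μ ≤ b) :
    c - b ≤ (c - a) * μ.real {x | ∀ n : ℕ, birkhoffSum T f n x ≤ n * c} := by
  set φ : α → ℝ := fun x => f x - c
  set E := {x | ∃ n, 0 < birkhoffSum T φ n x}
  have hφm : Measurable φ := hfm.sub_const c
  have hφ : Integrable φ μ := hf.sub (integrable_const c)
  have hE : MeasurableSet E := by
    simp only [E, Set.ofPred_exists]
    exact MeasurableSet.iUnion fun n =>
      measurableSet_lt measurable_const (measurable_birkhoffSum hT.measurable hφm n)
  have hEc : Eᶜ = {x | ∀ n : ℕ, birkhoffSum T f n x ≤ n * c} := by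
    ext x
    simp [E, φ, birkhoffSum_sub_const]
  have hE_nonneg : 0 ≤ ∫ x in E, φ x ∂μ := setIntegral_exists_birkhoffSum_pos_nonneg hT hφm hφ
  have hEc_ge : (a - c) * μ.real Eᶜ ≤ ∫ x in Eᶜ, φ x ∂μ :=
    setIntegral_ge_of_const_le_real hE.compl (measure_ne_top _ _)
      (fun x _ => sub_le_sub_right (ha x) c) hφ.integrableOn
  have hφ_le : ∫ x, φ x ∂μ ≤ b - c := by
    rw [integral_sub hf (integrable_const c), integral_const, probReal_univ, one_smul]
    linarith
  rw [← hEc]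
  linarith [integral_add_compl hE hφ]

end Pliss

lemma AEMeasurable.exists_measurable_ae_eq_forall_le {α : Type*} [MeasurableSpace α]
    {μ : Measure α} {g : α → ℝ} {a : ℝ} (hg : AEMeasurable g μ) (ha : ∀ x, a ≤ g x) :
    ∃ G : α → ℝ, Measurable G ∧ G =ᵐ[μ] g ∧ ∀ x, a ≤ G x :=
  ⟨fun x => hg.mk g x ⊔ a, hg.measurable_mk.sup measurable_const,
    hg.ae_eq_mk.mono fun x hx => (sup_eq_left.2 (hx ▸ ha x)).trans hx.symm, fun _ => le_sup_right⟩

theorem stmt_7 {X : Type*} [MeasurableSpace X] (μ : Measure X) [IsProbabilityMeasure μ]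
    (T : X → X) (hT : Ergodic T μ)
    (g : X → ℝ) (hg : Integrable g μ)
    (α₁ α₂ α₃ : ℝ) (h12 : α₁ < α₂) (h23 : α₂ < α₃)
    (hlow : ∀ x, g x > α₁) (hint : ∫ x, g x ∂μ ≤ α₂) :
    (μ {x | ∀ n ≥ 1, (∑ i ∈ Finset.range n, g (T^[i] x)) / n ≤ α₃}).toReal
      ≥ (α₃ - α₂)/(α₃ - α₁) := by
  have hTμ : MeasurePreserving T μ μ := hT.toMeasurePreserving
  obtain ⟨G, hGm, hGg, hGlow⟩ :=
    hg.aemeasurable.exists_measurable_ae_eq_forall_le fun x => (hlow x).le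
  have hbound := sub_le_mul_measureReal_forall_birkhoffSum_le (c := α₃) hTμ hGm
    (hg.congr hGg.symm) hGlow ((integral_congr_ae hGg).trans_le hint)
  have hsub : {x | ∀ n : ℕ, birkhoffSum T G n x ≤ n * α₃} ≤ᵐ[μ]
      {x | ∀ n ≥ 1, (∑ i ∈ Finset.range n, g (T^[i] x)) / n ≤ α₃} := by
    filter_upwards [ae_all_iff.2 fun n =>
      hTμ.quasiMeasurePreserving.birkhoffSum_ae_eq_of_ae_eq hGg n] with x hx hxG n hn
    rw [div_le_iff₀ (by exact_mod_cast hn), mul_comm]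
    exact (hx n).symm.trans_le (hxG n)
  rw [ge_iff_le, div_le_iff₀ (by linarith), mul_comm]
  exact hbound.trans (mul_le_mul_of_nonneg_left
    (ENNReal.toReal_mono (measure_ne_top _ _) (measure_mono_ae hsub)) (by linarith))
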